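/- arXiv:2009.03845 — 2 statements merged into one kernel-verified Lean document; each statement's English description precedes it below -/
import Mathlib

section
/- Let N ≥ 2 be an integer, p > N, α > 0, a₁ > 0, and let f : ℝ → ℝ be continuous with 0 ≤ t·f(t) ≤ a₁|t|^p · φ_N(α|t|^{N/(N−1)}) for all t ∈ ℝ. Let f_k be the Strauss approximation of f. Then for every k ∈ ℕ and every s with |s| ≥ 1/k, one has 0 ≤ s·f_k(s) ≤ a₁·2^p·|s|^p·φ_N(2^{N/(N−1)} α |s|^{N/(N−1)}). -/
/-- φ_N(t) = e^t − Σ_{j=0}^{N−2} t^j/j! -/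
noncomputable def phiN (N : ℕ) (t : ℝ) : ℝ :=
  Real.exp t - ∑ j ∈ Finset.range (N - 1), t ^ j / (Nat.factorial j : ℝ)

/-- G(s) = ∫₀^s f(ξ) dξ -/
noncomputable def Gfun (f : ℝ → ℝ) (s : ℝ) : ℝ := ∫ ξ in (0:ℝ)..s, f ξ

/-- The Strauss approximation f_k of f, defined piecewise via G = Gfun f. -/
noncomputable def strauss (f : ℝ → ℝ) (k : ℕ) (s : ℝ) : ℝ :=
  let G := Gfun f
  if s ≤ -(k:ℝ) then -(k:ℝ) * (G (-(k:ℝ) - 1/(k:ℝ)) - G (-(k:ℝ)))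
  else if s ≤ -(1/(k:ℝ)) then -(k:ℝ) * (G (s - 1/(k:ℝ)) - G s)
  else if s ≤ 0 then (k:ℝ)^2 * s * (G (-(2/(k:ℝ))) - G (-(1/(k:ℝ))))
  else if s ≤ 1/(k:ℝ) then (k:ℝ)^2 * s * (G (2/(k:ℝ)) - G (1/(k:ℝ)))
  else if s ≤ (k:ℝ) then (k:ℝ) * (G (s + 1/(k:ℝ)) - G s)
  else (k:ℝ) * (G ((k:ℝ) + 1/(k:ℝ)) - G (k:ℝ))

/-!
For `s ≥ 1/k`, `f_k(s)` is `k` times the integral of `f` over an interval of length `1/k`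
contained in `(0, 2s]`. There `0 ≤ f(x) ≤ a₁ x^(p-1) φ_N(α x^c)` with `c = N/(N-1)`, and
`φ_N` is increasing on `[0, ∞)` (its derivative is `φ_{N-1} ≥ 0`), so
`s f_k(s) ≤ 2s · a₁ (2s)^(p-1) φ_N(α (2s)^c) = a₁ 2^p s^p φ_N(2^c α s^c)`.
For `s ≤ -1/k` one applies this to the odd reflection `t ↦ -f(-t)`, which satisfies the same
growth hypothesis and whose Strauss approximation is the odd reflection of `f_k`.
-/

open Finset Nat

theorem hasDerivAt_sum_range_pow_div_factorial (M : ℕ) (t : ℝ) :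
    HasDerivAt (fun t : ℝ => ∑ j ∈ range (M + 1), t ^ j / (j ! : ℝ))
      (∑ j ∈ range M, t ^ j / (j ! : ℝ)) t := by
  induction M with
  | zero => simpa using hasDerivAt_const t (1 : ℝ)
  | succ M ih =>
    rw [show (fun t : ℝ => ∑ j ∈ range (M + 1 + 1), t ^ j / (j ! : ℝ)) =
        fun t => ∑ j ∈ range (M + 1), t ^ j / (j ! : ℝ) + t ^ (M + 1) / ((M + 1)! : ℝ) from
      funext fun t => sum_range_succ _ _]
    refine (ih.add ((hasDerivAt_pow (M + 1) t).div_const ((M + 1)! : ℝ))).congr_deriv ?_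
    rw [sum_range_succ, Nat.factorial_succ]
    push_cast
    field_simp

theorem hasDerivAt_phiN (N : ℕ) (t : ℝ) : HasDerivAt (phiN N) (phiN (N - 1) t) t := by
  change HasDerivAt (fun t => Real.exp t - ∑ j ∈ range (N - 1), t ^ j / (j ! : ℝ)) _ t
  obtain hN | ⟨M, hM⟩ : N - 1 = 0 ∨ ∃ M, N - 1 = M + 1 := by
    rcases N - 1 with _ | M <;> simp
  · simpa [phiN, hN] using Real.hasDerivAt_exp t
  · simpa only [phiN, hM, Nat.add_sub_cancel] using
      (Real.hasDerivAt_exp t).fun_sub (hasDerivAt_sum_range_pow_div_factorial M t)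

theorem phiN_nonneg (N : ℕ) {t : ℝ} (ht : 0 ≤ t) : 0 ≤ phiN N t :=
  sub_nonneg.2 (Real.sum_le_exp_of_nonneg ht _)

theorem monotoneOn_phiN (N : ℕ) : MonotoneOn (phiN N) (Set.Ici 0) :=
  monotoneOn_of_hasDerivWithinAt_nonneg (convex_Ici 0)
    (fun t _ => (hasDerivAt_phiN N t).continuousAt.continuousWithinAt)
    (fun t _ => (hasDerivAt_phiN N t).hasDerivWithinAt)
    (fun t ht => phiN_nonneg _ (by rw [interior_Ici] at ht; exact ht.le))

theorem Gfun_neg_comp_neg (f : ℝ → ℝ) (u : ℝ) :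
    Gfun (fun t => -f (-t)) u = Gfun f (-u) := by
  simp only [Gfun]
  rw [intervalIntegral.integral_neg, intervalIntegral.integral_comp_neg, neg_zero,
    ← intervalIntegral.integral_symm]

section Strauss

variable (f : ℝ → ℝ) {k : ℕ} {s : ℝ}

theorem strauss_of_inv_le (hk : 0 < k) (hs : 1 / (k : ℝ) ≤ s) :
    strauss f k s = k * (Gfun f (min s k + 1 / k) - Gfun f (min s k)) := by
  have hk₁ : (1 : ℝ) ≤ k := by exact_mod_cast hk
  have hinv : 0 < 1 / (k : ℝ) := by positivity
  have hkinv : 1 / (k : ℝ) ≤ k := (div_le_one₀ (by positivity)).2 hk₁ |>.trans hk₁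
  simp only [strauss]
  split_ifs with h₁ h₂ h₃ h₄ h₅
  · linarith
  · linarith
  · linarith
  · obtain rfl : s = 1 / k := le_antisymm h₄ hs
    rw [min_eq_left hkinv]
    field_simp
    ring_nf
  · rw [min_eq_left h₅]
  · rw [min_eq_right (not_le.1 h₅).le]

theorem strauss_of_le_neg_inv (hs : s ≤ -(1 / (k : ℝ))) :
    strauss f k s = -k * (Gfun f (max s (-k) - 1 / k) - Gfun f (max s (-k))) := by
  simp only [strauss]
  split_ifs with h₁
  · rw [max_eq_right h₁]
  · rw [max_eq_left (not_le.1 h₁).le]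

theorem strauss_neg_comp_neg_of_inv_le (hk : 0 < k) (hs : 1 / (k : ℝ) ≤ s) :
    strauss (fun t => -f (-t)) k s = -strauss f k (-s) := by
  rw [strauss_of_inv_le _ hk hs, strauss_of_le_neg_inv f (neg_le_neg hs), Gfun_neg_comp_neg,
    Gfun_neg_comp_neg, max_neg_neg]
  ring_nf

end Strauss

theorem integral_nonneg_and_le_of_mem_Icc {f : ℝ → ℝ} {a h B : ℝ} (hh : 0 ≤ h)
    (hf : IntervalIntegrable f MeasureTheory.volume a (a + h))
    (hbound : ∀ x ∈ Set.Icc a (a + h), 0 ≤ f x ∧ f x ≤ B) :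
    0 ≤ ∫ x in a..a + h, f x ∧ ∫ x in a..a + h, f x ≤ h * B := by
  refine ⟨intervalIntegral.integral_nonneg (by linarith) fun x hx => (hbound x hx).1, ?_⟩
  have h := intervalIntegral.integral_mono_on (by linarith) hf intervalIntegrable_const
    fun x hx => (hbound x hx).2
  rwa [intervalIntegral.integral_const, smul_eq_mul, add_sub_cancel_left] at h

/-- The growth condition of the theorem at `t`, with a general exponent `c` in place of
`N / (N - 1)`. -/
def GrowthBoundAt (N : ℕ) (p c α a : ℝ) (f : ℝ → ℝ) (t : ℝ) : Prop :=
  0 ≤ t * f t ∧ t * f t ≤ a * |t| ^ p * phiN N (α * |t| ^ c)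

section Growth

variable {N : ℕ} {p c α a : ℝ} {f g : ℝ → ℝ} {t : ℝ}

theorem GrowthBoundAt.of_neg (h : GrowthBoundAt N p c α a g (-t)) (hfg : g (-t) = -f t) :
    GrowthBoundAt N p c α a f t := by
  simpa only [GrowthBoundAt, hfg, neg_mul_neg, abs_neg] using h

theorem GrowthBoundAt.le_of_le (hp : 1 ≤ p) (hc : 0 ≤ c) (hα : 0 ≤ α) (ha : 0 ≤ a)
    (h : GrowthBoundAt N p c α a f t) (ht : 0 < t) {y : ℝ} (hty : t ≤ y) :
    f t ≤ a * y ^ (p - 1) * phiN N (α * y ^ c) := by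
  have hft : f t ≤ a * t ^ (p - 1) * phiN N (α * t ^ c) := by
    refine le_of_mul_le_mul_left ?_ ht
    calc t * f t ≤ a * t ^ p * phiN N (α * t ^ c) := by simpa only [abs_of_pos ht] using h.2
      _ = t * (a * t ^ (p - 1) * phiN N (α * t ^ c)) := by
        rw [Real.rpow_sub_one ht.ne']; field_simp
  have hy : 0 < y := ht.trans_le hty
  have hty_c : α * t ^ c ≤ α * y ^ c := by gcongr
  calc f t ≤ a * t ^ (p - 1) * phiN N (α * t ^ c) := hft
    _ ≤ a * y ^ (p - 1) * phiN N (α * y ^ c) := by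
      refine mul_le_mul (mul_le_mul_of_nonneg_left (Real.rpow_le_rpow ht.le hty (by linarith)) ha)
        (monotoneOn_phiN N (Set.mem_Ici.2 (by positivity)) (Set.mem_Ici.2 (by positivity)) hty_c)
        (phiN_nonneg N (by positivity)) (by positivity)

theorem growthBoundAt_strauss_of_inv_le (hp : 1 ≤ p) (hc : 0 ≤ c) (hα : 0 ≤ α)
    (ha : 0 ≤ a) (hf : Continuous f) (hgrowth : ∀ t, GrowthBoundAt N p c α a f t)
    {k : ℕ} (hk : 0 < k)
    {s : ℝ} (hs : 1 / (k : ℝ) ≤ s) :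
    GrowthBoundAt N p c (2 ^ c * α) (a * 2 ^ p) (strauss f k) s := by
  have hinv : 0 < 1 / (k : ℝ) := by positivity
  have hs₀ : 0 < s := hinv.trans_le hs
  set m := min s (k : ℝ)
  have hm : 0 < m := lt_min hs₀ (by exact_mod_cast hk)
  have hm₂ : m + 1 / k ≤ 2 * s := by linarith [min_le_left s (k : ℝ)]
  have hval : strauss f k s = k * ∫ x in m..m + 1 / k, f x := by
    rw [strauss_of_inv_le f hk hs, Gfun, Gfun,
      intervalIntegral.integral_interval_sub_left (hf.intervalIntegrable _ _)
        (hf.intervalIntegrable _ _)]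
  set B := a * (2 * s) ^ (p - 1) * phiN N (α * (2 * s) ^ c) with hB_def
  have hB : 0 ≤ B := mul_nonneg (by positivity) (phiN_nonneg N (by positivity))
  have hbound : ∀ x ∈ Set.Icc m (m + 1 / k), 0 ≤ f x ∧ f x ≤ B := fun x hx =>
    have hx₀ : 0 < x := hm.trans_le hx.1
    ⟨nonneg_of_mul_nonneg_right (hgrowth x).1 hx₀,
      (hgrowth x).le_of_le hp hc hα ha hx₀ (hx.2.trans hm₂)⟩
  obtain ⟨hI₀, hI⟩ :=
    integral_nonneg_and_le_of_mem_Icc hinv.le (hf.intervalIntegrable _ _) hbound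
  have hkI : k * ∫ x in m..m + 1 / k, f x ≤ B := by
    calc k * ∫ x in m..m + 1 / k, f x ≤ k * (1 / k * B) := by gcongr
      _ = B := by field_simp
  refine ⟨by rw [hval]; positivity, ?_⟩
  calc s * strauss f k s ≤ s * B := by rw [hval]; gcongr
    _ ≤ 2 * s * B := mul_le_mul_of_nonneg_right (by linarith) hB
    _ = a * (2 * s) ^ p * phiN N (α * (2 * s) ^ c) := by
        rw [hB_def, Real.rpow_sub_one (by positivity)]
        field_simp
    _ = a * 2 ^ p * |s| ^ p * phiN N (2 ^ c * α * |s| ^ c) := by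
        rw [Real.mul_rpow zero_le_two hs₀.le, Real.mul_rpow zero_le_two hs₀.le,
          abs_of_pos hs₀]
        ring_nf

end Growth

/-- growth estimate for s·f_k(s) when |s| ≥ 1/k. -/
theorem stmt_8 (N : ℕ) (hN : 2 ≤ N) (p α a₁ : ℝ) (hp : (N:ℝ) < p) (hα : 0 < α)
    (ha₁ : 0 < a₁) (f : ℝ → ℝ) (hf : Continuous f)
    (hgrowth : ∀ t : ℝ, 0 ≤ t * f t ∧
      t * f t ≤ a₁ * |t| ^ p * phiN N (α * |t| ^ ((N:ℝ)/((N:ℝ)-1))))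
    (k : ℕ) (hk : 0 < k) :
    ∀ s : ℝ, 1/(k:ℝ) ≤ |s| →
      0 ≤ s * strauss f k s ∧
      s * strauss f k s ≤
        a₁ * 2 ^ p * |s| ^ p *
          phiN N ((2:ℝ) ^ ((N:ℝ)/((N:ℝ)-1)) * α * |s| ^ ((N:ℝ)/((N:ℝ)-1))) := by
  have hN' : (2 : ℝ) ≤ N := by exact_mod_cast hN
  have hp₁ : 1 ≤ p := by linarith
  have hc : (0 : ℝ) ≤ N / (N - 1) := div_nonneg (by linarith) (by linarith)
  intro s hs
  rcases le_or_gt (1 / (k : ℝ)) s with hpos | hneg_lt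
  · exact growthBoundAt_strauss_of_inv_le hp₁ hc hα.le ha₁.le hf hgrowth hk hpos
  · have hneg : 1 / (k : ℝ) ≤ -s := by
      rcases abs_cases s with ⟨h, -⟩ | ⟨h, -⟩ <;> linarith
    have hreflect : ∀ t, GrowthBoundAt N p _ α a₁ (fun t => -f (-t)) t := fun t =>
      GrowthBoundAt.of_neg (hgrowth (-t)) (neg_neg _).symm
    exact (growthBoundAt_strauss_of_inv_le hp₁ hc hα.le ha₁.le (by fun_prop) hreflect hk
      hneg).of_neg (by rw [strauss_neg_comp_neg_of_inv_le f hk hneg, neg_neg])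
end

section
/- Let N ≥ 2 be an integer, p > N, α > 0, a₁ > 0, and let f : ℝ → ℝ be continuous with 0 ≤ t·f(t) ≤ a₁|t|^p · φ_N(α|t|^{N/(N−1)}) for all t ∈ ℝ. Let f_k be the Strauss approximation of f. Then for every k ∈ ℕ and every s with |s| ≤ 1/k, one has 0 ≤ s·f_k(s) ≤ a₁·2^{p−1}·exp(2^{N/(N−1)} α)·k^{−(p−2)}·|s|². -/
/-!
On `|s| ≤ 1/k` the Strauss approximation is linear, `f_k(s) = k² s D`, where `D` is the
integral of `f` over `[1/k, 2/k]` (for `s ≤ 0`, of the reflection `u ↦ -f(-u)`, which satisfies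
the same growth condition). Since `φ_N ≤ exp` on `[0, ∞)`, the growth condition gives
`0 ≤ f ≤ a₁ (2/k)^(p-1) exp (2^(N/(N-1)) α)` on `[1/k, 2/k]`, so `0 ≤ D ≤ (1/k)` times that bound,
and `s f_k(s) = k² s² D` yields the claim.
-/

open Real intervalIntegral

def HasCriticalGrowth (N : ℕ) (p α a₁ q : ℝ) (f : ℝ → ℝ) : Prop :=
  ∀ t : ℝ, 0 ≤ t * f t ∧ t * f t ≤ a₁ * |t| ^ p * phiN N (α * |t| ^ q)

lemma phiN_le_exp (N : ℕ) {x : ℝ} (hx : 0 ≤ x) : phiN N x ≤ exp x := by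
  have : 0 ≤ ∑ j ∈ Finset.range (N - 1), x ^ j / (j.factorial : ℝ) := by positivity
  unfold phiN
  linarith

lemma Gfun_comp_neg (f : ℝ → ℝ) (x : ℝ) : Gfun (fun u => -f (-u)) x = Gfun f (-x) := by
  rw [Gfun, Gfun, integral_neg, integral_comp_neg, integral_symm, neg_neg, neg_zero]

lemma Gfun_sub_Gfun {f : ℝ → ℝ} (hf : Continuous f) (a b : ℝ) :
    Gfun f b - Gfun f a = ∫ t in a..b, f t :=
  integral_interval_sub_left (hf.intervalIntegrable _ _) (hf.intervalIntegrable _ _)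

namespace HasCriticalGrowth

variable {N : ℕ} {p α a₁ q : ℝ} {f : ℝ → ℝ}

lemma comp_neg (hf : HasCriticalGrowth N p α a₁ q f) :
    HasCriticalGrowth N p α a₁ q (fun u => -f (-u)) := fun t => by
  simpa [abs_neg] using hf (-t)

lemma nonneg (hf : HasCriticalGrowth N p α a₁ q f) {t : ℝ} (ht : 0 < t) : 0 ≤ f t :=
  nonneg_of_mul_nonneg_right (hf t).1 ht

lemma apply_le (hf : HasCriticalGrowth N p α a₁ q f) (ha₁ : 0 ≤ a₁) (hα : 0 ≤ α) (hp : 1 ≤ p)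
    (hq : 0 ≤ q) {t r : ℝ} (ht : 0 < t) (htr : t ≤ r) :
    f t ≤ a₁ * r ^ (p - 1) * exp (α * r ^ q) := by
  have hp1 : 0 ≤ p - 1 := by linarith
  have hbound : t * f t ≤ t * (a₁ * t ^ (p - 1) * exp (α * t ^ q)) := calc
    t * f t ≤ a₁ * t ^ p * phiN N (α * t ^ q) := by simpa [abs_of_pos ht] using (hf t).2
    _ ≤ a₁ * t ^ p * exp (α * t ^ q) := by gcongr; exact phiN_le_exp N (by positivity)
    _ = t * (a₁ * t ^ (p - 1) * exp (α * t ^ q)) := by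
      rw [rpow_sub_one ht.ne']; field_simp
  calc f t ≤ a₁ * t ^ (p - 1) * exp (α * t ^ q) := le_of_mul_le_mul_left hbound ht
    _ ≤ a₁ * r ^ (p - 1) * exp (α * r ^ q) := by have := ht.le.trans htr; gcongr

lemma Gfun_sub_Gfun_mem_Icc (hf : Continuous f) (hg : HasCriticalGrowth N p α a₁ q f)
    (ha₁ : 0 ≤ a₁) (hα : 0 ≤ α) (hp : 1 ≤ p) (hq : 0 ≤ q) {k : ℝ} (hk : 0 < k) :
    Gfun f (2 / k) - Gfun f (1 / k) ∈
      Set.Icc 0 (1 / k * (a₁ * (2 / k) ^ (p - 1) * exp (α * (2 / k) ^ q))) := by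
  have hle : 1 / k ≤ 2 / k := by gcongr; norm_num
  have hpos : ∀ t ∈ Set.Icc (1 / k) (2 / k), 0 < t := fun t ht =>
    (one_div_pos.2 hk).trans_le ht.1
  rw [Gfun_sub_Gfun hf]
  refine ⟨integral_nonneg hle fun t ht => hg.nonneg (hpos t ht), ?_⟩
  have := integral_mono_on hle (hf.intervalIntegrable _ _)
    (intervalIntegrable_const (μ := MeasureTheory.volume))
    fun t ht => hg.apply_le ha₁ hα hp hq (hpos t ht) ht.2
  rwa [integral_const, smul_eq_mul, show 2 / k - 1 / k = 1 / k by ring] at this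

end HasCriticalGrowth

lemma strauss_of_pos_of_le {f : ℝ → ℝ} {k : ℕ} {s : ℝ} (hs0 : 0 < s) (hs : s ≤ 1 / k) :
    strauss f k s = k ^ 2 * s * (Gfun f (2 / k) - Gfun f (1 / k)) := by
  have hk : (0 : ℝ) ≤ 1 / k := by positivity
  simp only [strauss]
  rw [if_neg (by linarith), if_neg (by linarith), if_neg hs0.not_ge, if_pos hs]

lemma strauss_of_neg_le_of_nonpos {f : ℝ → ℝ} {k : ℕ} {s : ℝ} (hk : 0 < k) (hs : -(1 / k) ≤ s)
    (hs0 : s ≤ 0) :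
    strauss f k s = k ^ 2 * s * (Gfun f (-(2 / k)) - Gfun f (-(1 / k))) := by
  have hkR : (1 : ℝ) ≤ k := by exact_mod_cast hk
  have hinv : 1 / (k : ℝ) ≤ k := (div_le_one₀ (by positivity)).2 hkR |>.trans hkR
  simp only [strauss]
  -- at `s = -1/k` the second branch applies, or the first one if `k = 1`; both agree here
  rcases hs.eq_or_lt with rfl | hlt
  · by_cases hk1 : -(1 / (k : ℝ)) ≤ -k
    · obtain rfl : k = 1 := by
        have : (k : ℝ) ≤ 1 := by nlinarith [(le_div_iff₀ (by positivity)).1 (neg_le_neg_iff.1 hk1)]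
        exact_mod_cast le_antisymm this hkR
      norm_num
    · rw [if_neg hk1, if_pos le_rfl, show -(1 / (k : ℝ)) - 1 / k = -(2 / k) by ring]
      field_simp
  · rw [if_neg (by linarith), if_neg hlt.not_ge, if_pos hs0]

/-- estimate for s·f_k(s) when |s| ≤ 1/k. -/
theorem stmt_9 (N : ℕ) (hN : 2 ≤ N) (p α a₁ : ℝ) (hp : (N:ℝ) < p) (hα : 0 < α)
    (ha₁ : 0 < a₁) (f : ℝ → ℝ) (hf : Continuous f)
    (hgrowth : ∀ t : ℝ, 0 ≤ t * f t ∧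
      t * f t ≤ a₁ * |t| ^ p * phiN N (α * |t| ^ ((N:ℝ)/((N:ℝ)-1))))
    (k : ℕ) (hk : 0 < k) :
    ∀ s : ℝ, |s| ≤ 1/(k:ℝ) →
      0 ≤ s * strauss f k s ∧
      s * strauss f k s ≤
        a₁ * 2 ^ (p - 1) * Real.exp ((2:ℝ) ^ ((N:ℝ)/((N:ℝ)-1)) * α) *
          ((k:ℝ) ^ (p - 2))⁻¹ * s ^ 2 := by
  intro s hs
  have hN' : (2 : ℝ) ≤ N := by exact_mod_cast hN
  have hkR : (1 : ℝ) ≤ k := by exact_mod_cast hk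
  set q : ℝ := (N : ℝ) / ((N : ℝ) - 1)
  have hq : 0 ≤ q := div_nonneg (by linarith) (by linarith)
  have hg : HasCriticalGrowth N p α a₁ q f := hgrowth
  -- for `s ≤ 0` pass to the reflection `u ↦ -f (-u)`, which has the same growth
  obtain ⟨g, hgc, hgg, hsg⟩ : ∃ g : ℝ → ℝ, Continuous g ∧ HasCriticalGrowth N p α a₁ q g ∧
      s * strauss f k s = k ^ 2 * s ^ 2 * (Gfun g (2 / k) - Gfun g (1 / k)) := by
    rcases le_or_gt s 0 with hs0 | hs0
    · refine ⟨fun u => -f (-u), by fun_prop, hg.comp_neg, ?_⟩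
      rw [strauss_of_neg_le_of_nonpos hk (abs_le.1 hs).1 hs0, Gfun_comp_neg, Gfun_comp_neg]
      ring
    · exact ⟨f, hf, hg, by rw [strauss_of_pos_of_le hs0 (abs_le.1 hs).2]; ring⟩
  obtain ⟨hD0, hD⟩ := hgg.Gfun_sub_Gfun_mem_Icc hgc ha₁.le hα.le (by linarith) hq
    (by positivity : (0 : ℝ) < k)
  rw [hsg]
  refine ⟨by positivity, ?_⟩
  have h2k : 2 / (k : ℝ) ≤ 2 := div_le_self zero_le_two hkR
  calc (k : ℝ) ^ 2 * s ^ 2 * (Gfun g (2 / k) - Gfun g (1 / k))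
      ≤ k ^ 2 * s ^ 2 * (1 / k * (a₁ * (2 / k) ^ (p - 1) * exp (α * (2 / k) ^ q))) := by
        gcongr
    _ ≤ k ^ 2 * s ^ 2 * (1 / k * (a₁ * (2 / k) ^ (p - 1) * exp (2 ^ q * α))) := by
        rw [mul_comm (2 ^ q)]
        gcongr
    _ = a₁ * 2 ^ (p - 1) * exp (2 ^ q * α) * ((k : ℝ) ^ (p - 2))⁻¹ * s ^ 2 := by
        have hkp : (k : ℝ) ^ (p - 1) = k ^ (p - 2) * k := by
          rw [← rpow_add_one (by positivity)]; ring_nf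
        rw [div_rpow zero_le_two (by positivity), hkp]
        field_simp
end
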